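/- arXiv:1804.09649 — 12 statements merged into one kernel-verified Lean document; each statement's English description precedes it below -/
import Mathlib

section
/- In the two-player GSP game with values v = (λ, 1), budgets c = (1+ε, 1), CTRs α = (1, 1/λ), λ > 2, ε ∈ (0, 1/2), the bid vector b = (1+ε, 1) is a pure Nash equilibrium inducing the assignment where player 1 gets position 1: player 1's utility at b is λ − 1, player 2's utility is 1/λ, and any deviation of player 1 to a bid below 1 (yielding position 2 and utility 1) gives utility at most λ − 1. -/
/-! Two-player position game: values (λ, 1), budgets (1+ε, 1), CTRs (1, 1/λ).
Ties in bids are broken in favor of player 1. -/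

/-- GSP utility of player 1: in position 1 she pays player 2's bid per click;
in position 2 she pays nothing and gets CTR (1/λ) times her value λ. -/
noncomputable def gspU1 (lam b1 b2 : ℝ) : ℝ :=
  if b2 ≤ b1 then 1 * (lam - b2) else (1 / lam) * lam

/-- GSP utility of player 2. -/
noncomputable def gspU2 (lam b1 b2 : ℝ) : ℝ :=
  if b2 ≤ b1 then (1 / lam) * 1 else 1 * (1 - b1)

/-- No-over assumption for player 1's bid: CTR of her position times her bid is at
most the minimum of her value (times CTR) and her budget 1+ε. -/
noncomputable def noOver1 (lam eps b1 b2 : ℝ) : Prop :=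
  if b2 ≤ b1 then 1 * b1 ≤ min (1 * lam) (1 + eps)
  else (1 / lam) * b1 ≤ min ((1 / lam) * lam) (1 + eps)

/-- No-over assumption for player 2's bid (value 1, budget 1). -/
noncomputable def noOver2 (lam b1 b2 : ℝ) : Prop :=
  if b2 ≤ b1 then (1 / lam) * b2 ≤ min ((1 / lam) * 1) 1
  else 1 * b2 ≤ min (1 * 1) 1

/-- Pure Nash equilibrium of the two-player GSP game, over no-over bids. -/
noncomputable def GspEq2 (lam eps b1 b2 : ℝ) : Prop :=
  0 ≤ b1 ∧ 0 ≤ b2 ∧ noOver1 lam eps b1 b2 ∧ noOver2 lam b1 b2 ∧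
    (∀ y, 0 ≤ y → noOver1 lam eps y b2 → gspU1 lam y b2 ≤ gspU1 lam b1 b2) ∧
    (∀ y, 0 ≤ y → noOver2 lam b1 y → gspU2 lam b1 y ≤ gspU2 lam b1 b2)

/-- VCG payment of player 1. -/
noncomputable def vcgPay1 (lam b1 b2 : ℝ) : ℝ :=
  if b2 ≤ b1 then b2 * (1 - 1 / lam) else 0

/-- VCG utility of player 1. -/
noncomputable def vcgU1 (lam b1 b2 : ℝ) : ℝ :=
  if b2 ≤ b1 then 1 * lam - b2 * (1 - 1 / lam) else (1 / lam) * lam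

/-- VCG utility of player 2. -/
noncomputable def vcgU2 (lam b1 b2 : ℝ) : ℝ :=
  if b2 ≤ b1 then (1 / lam) * 1 else 1 * 1 - b1 * (1 - 1 / lam)

/-- Pure Nash equilibrium of the two-player VCG game, over no-over bids. -/
noncomputable def VcgEq2 (lam eps b1 b2 : ℝ) : Prop :=
  0 ≤ b1 ∧ 0 ≤ b2 ∧ noOver1 lam eps b1 b2 ∧ noOver2 lam b1 b2 ∧
    (∀ y, 0 ≤ y → noOver1 lam eps y b2 → vcgU1 lam y b2 ≤ vcgU1 lam b1 b2) ∧
    (∀ y, 0 ≤ y → noOver2 lam b1 y → vcgU2 lam b1 y ≤ vcgU2 lam b1 b2)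

/-- EGFP utility of player 1 with per-position bids (b11, b12) and (b21, b22):
the winner of each position pays her own bid for it. -/
noncomputable def egfpU1 (lam b11 b12 b21 b22 : ℝ) : ℝ :=
  if b21 ≤ b11 then 1 * lam - b11 else (1 / lam) * lam - b12

/-- EGFP utility of player 2. -/
noncomputable def egfpU2 (lam b11 b12 b21 b22 : ℝ) : ℝ :=
  if b21 ≤ b11 then (1 / lam) * 1 - b22 else 1 * 1 - b21

/-- Budget feasibility of player 1's EGFP payment (budget 1+ε). -/
noncomputable def egfpFeas1 (eps b11 b12 b21 : ℝ) : Prop :=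
  (if b21 ≤ b11 then b11 else b12) ≤ 1 + eps

/-- Budget feasibility of player 2's EGFP payment (budget 1). -/
noncomputable def egfpFeas2 (b11 b21 b22 : ℝ) : Prop :=
  (if b21 ≤ b11 then b22 else b21) ≤ 1

/-- Pure Nash equilibrium of the two-player EGFP game (payments within budgets). -/
noncomputable def EgfpEq2 (lam eps b11 b12 b21 b22 : ℝ) : Prop :=
  0 ≤ b11 ∧ 0 ≤ b12 ∧ 0 ≤ b21 ∧ 0 ≤ b22 ∧
    egfpFeas1 eps b11 b12 b21 ∧ egfpFeas2 b11 b21 b22 ∧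
    (∀ y1 y2, 0 ≤ y1 → 0 ≤ y2 → egfpFeas1 eps y1 y2 b21 →
      egfpU1 lam y1 y2 b21 b22 ≤ egfpU1 lam b11 b12 b21 b22) ∧
    (∀ y1 y2, 0 ≤ y1 → 0 ≤ y2 → egfpFeas2 b11 y1 y2 →
      egfpU2 lam b11 b12 y1 y2 ≤ egfpU2 lam b11 b12 b21 b22)

/-- Liquid welfare of the assignment (player 1 → position 1, player 2 → position 2). -/
noncomputable def LW12 (lam eps : ℝ) : ℝ := min (1 * lam) (1 + eps) + min ((1 / lam) * 1) 1

/-- Liquid welfare of the reverse assignment. -/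
noncomputable def LW21 (lam eps : ℝ) : ℝ := min (1 * 1) (1 + eps) + min ((1 / lam) * lam) 1

theorem stmt2 (lam eps : ℝ) (hlam : 2 < lam) (heps0 : 0 < eps) (heps : eps < 1 / 2) :
    GspEq2 lam eps (1 + eps) 1 ∧
    gspU1 lam (1 + eps) 1 = lam - 1 ∧
    gspU2 lam (1 + eps) 1 = 1 / lam ∧
    ∀ y : ℝ, y < 1 → gspU1 lam y 1 = 1 ∧ gspU1 lam y 1 ≤ lam - 1 := by
  have hlam0 : (0:ℝ) < lam := by linarith
  have hle : (1:ℝ) ≤ 1 + eps := by linarith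
  have hinv : (1 / lam) * lam = 1 := by field_simp
  refine ⟨⟨by linarith, by norm_num, ?_, ?_, ?_, ?_⟩, ?_, ?_, ?_⟩
  · simp only [noOver1, if_pos hle, one_mul]
    exact le_min (by linarith) le_rfl
  · simp only [noOver2, if_pos hle, one_mul, mul_one]
    exact le_min le_rfl (by rw [div_le_one hlam0]; linarith)
  · intro y hy hno
    simp only [gspU1, if_pos hle]
    by_cases h : (1:ℝ) ≤ y
    · simp [h]
    · simp only [if_neg h, hinv]; linarith
  · intro y hy hno
    simp only [gspU2, if_pos hle]
    by_cases h : y ≤ 1 + eps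
    · simp [h]
    · exfalso
      simp only [noOver2, if_neg h, one_mul, min_self] at hno
      linarith
  · simp only [gspU1, if_pos hle]; ring
  · simp only [gspU2, if_pos hle]; ring
  · intro y hy
    have h : ¬ (1:ℝ) ≤ y := not_le.mpr hy
    constructor
    · simp only [gspU1, if_neg h, hinv]
    · simp only [gspU1, if_neg h, hinv]; linarith
end

section
/- In the two-player GSP game with values (λ, 1), budgets (1+ε, 1), CTRs (1, 1/λ), λ > 2, ε ∈ (0, 1/2), no bid vector (b₁, b₂) with b₁ ≤ b₂ ≤ 1 (satisfying the no-over assumption for player 2) inducing the assignment where player 2 gets position 1 is a pure Nash equilibrium: player 1's deviation to b₁' = 1+ε yields utility λ − b₂ ≥ λ − 1 > 1, exceeding the equilibrium utility 1. -/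
theorem stmt3 (lam eps : ℝ) (hlam : 2 < lam) (heps0 : 0 < eps) (heps : eps < 1 / 2)
    (b1 b2 : ℝ) (hb : b1 ≤ b2) (hb2 : b2 ≤ 1) :
    gspU1 lam (1 + eps) b2 = lam - b2 ∧
    lam - 1 ≤ lam - b2 ∧ 1 < lam - 1 ∧
    (b1 < b2 → ¬ GspEq2 lam eps b1 b2) := by
  have hlt : b2 ≤ 1 + eps := le_trans hb2 (by linarith)
  have hlam0 : lam ≠ 0 := by linarith
  constructor
  · simp [gspU1, hlt]
  refine ⟨by linarith, by linarith, ?_⟩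
  intro hblt ⟨_, _, _, _, hbest1, _⟩
  have hno : noOver1 lam eps (1 + eps) b2 := by
    simp only [noOver1, if_pos hlt, one_mul]
    exact le_min (by linarith) le_rfl
  have h := hbest1 (1 + eps) (by linarith) hno
  rw [gspU1, if_pos hlt, gspU1, if_neg (not_le.mpr hblt)] at h
  have : (1 / lam) * lam = 1 := by field_simp
  rw [this] at h
  linarith
end

section
/- In the two-player VCG position game with values (λ, 1), budgets (1+ε, 1), CTRs (1, 1/λ), λ > 2, ε ∈ (0, 1/2), no bid vector (b₁, b₂) with b₁ ≤ b₂ ≤ 1 inducing the assignment where player 2 gets position 1 is a pure Nash equilibrium: deviating to b₁' = 1+ε > b₂ gives player 1 payment b₂(1 − 1/λ) ≤ 1 − 1/λ and utility λ − b₂(1 − 1/λ) ≥ λ − 1 + 1/λ > 1, exceeding her equilibrium utility 1. -/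
theorem stmt5 (lam eps : ℝ) (hlam : 2 < lam) (heps0 : 0 < eps) (heps : eps < 1 / 2)
    (b1 b2 : ℝ) (hb : b1 ≤ b2) (hb2 : b2 ≤ 1) :
    vcgPay1 lam (1 + eps) b2 = b2 * (1 - 1 / lam) ∧
    b2 * (1 - 1 / lam) ≤ 1 - 1 / lam ∧
    vcgU1 lam (1 + eps) b2 ≥ lam - 1 + 1 / lam ∧
    lam - 1 + 1 / lam > 1 ∧
    (b1 < b2 → ¬ VcgEq2 lam eps b1 b2) := by
  have hlam0 : 0 < lam := by linarith
  have hb2le : b2 ≤ 1 + eps := by linarith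
  have h1l : 0 < 1 - 1 / lam := by
    have : 1 / lam < 1 := by
      rw [div_lt_one hlam0]; linarith
    linarith
  have hpay : vcgPay1 lam (1 + eps) b2 = b2 * (1 - 1 / lam) := by
    simp [vcgPay1, hb2le]
  have hbound : b2 * (1 - 1 / lam) ≤ 1 - 1 / lam := by nlinarith
  have hU1 : vcgU1 lam (1 + eps) b2 = lam - b2 * (1 - 1 / lam) := by
    simp [vcgU1, hb2le]
  have hU1ge : vcgU1 lam (1 + eps) b2 ≥ lam - 1 + 1 / lam := by
    rw [hU1]; linarith
  have hgt : lam - 1 + 1 / lam > 1 := by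
    have : 0 < 1 / lam := by positivity
    linarith
  refine ⟨hpay, hbound, hU1ge, hgt, ?_⟩
  intro hlt hEq
  obtain ⟨_, _, _, _, h1, _⟩ := hEq
  have hno : noOver1 lam eps (1 + eps) b2 := by
    simp only [noOver1, if_pos hb2le, one_mul]
    exact le_min (by linarith) le_rfl
  have := h1 (1 + eps) (by linarith) hno
  have heqU : vcgU1 lam b1 b2 = 1 := by
    have : ¬ b2 ≤ b1 := not_le.mpr hlt
    simp [vcgU1, this]
    field_simp
  rw [heqU] at this
  linarith
end

section
/- In the two-player EGFP game with values (λ, 1), budgets (1+ε, 1), CTRs (1, 1/λ), λ > 2, ε ∈ (0, 1/2), and arbitrarily small δ > 0, the bid profile where player 1 bids (1+δ, 0) and player 2 bids (1, 0) is a pure Nash equilibrium (as δ → 0) inducing the assignment where player 1 gets position 1: player 1's utility λ − 1 − δ exceeds the utility 1 she would get by bidding below 1 for position 1. -/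
theorem stmt6 (lam eps δ : ℝ) (hlam : 2 < lam) (heps0 : 0 < eps) (heps : eps < 1 / 2)
    (hδ0 : 0 < δ) (hδ : δ < lam - 2) :
    egfpU1 lam (1 + δ) 0 1 0 = lam - 1 - δ ∧
    -- player 1 cannot gain more than δ by any feasible deviation (equilibrium as δ → 0)
    (∀ y1 y2 : ℝ, 0 ≤ y1 → 0 ≤ y2 → egfpFeas1 eps y1 y2 1 →
      egfpU1 lam y1 y2 1 0 ≤ egfpU1 lam (1 + δ) 0 1 0 + δ) ∧
    -- player 2 cannot gain by any feasible deviation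
    (∀ y1 y2 : ℝ, 0 ≤ y1 → 0 ≤ y2 → egfpFeas2 (1 + δ) y1 y2 →
      egfpU2 lam (1 + δ) 0 y1 y2 ≤ egfpU2 lam (1 + δ) 0 1 0) ∧
    -- bidding below 1 for position 1 yields position 2 and utility 1 < λ - 1 - δ
    (∀ p : ℝ, 0 ≤ p → p < 1 → egfpU1 lam p 0 1 0 = (1 / lam) * lam - 0) ∧
    (1 / lam) * lam - 0 < lam - 1 - δ := by
  have hl0 : (0:ℝ) < lam := by linarith
  have hll : (1 / lam) * lam = 1 := by field_simp
  have h1 : egfpU1 lam (1 + δ) 0 1 0 = lam - 1 - δ := by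
    simp only [egfpU1, if_pos (by linarith : (1:ℝ) ≤ 1 + δ)]; ring
  refine ⟨h1, ?_, ?_, ?_, ?_⟩
  · intro y1 y2 hy1 hy2 hfeas
    rw [h1]
    simp only [egfpU1, egfpFeas1] at *
    by_cases h : (1:ℝ) ≤ y1
    · rw [if_pos h] at *; linarith
    · rw [if_neg h] at *; rw [hll]; linarith
  · intro y1 y2 hy1 hy2 hfeas
    simp only [egfpU2, egfpFeas2] at *
    rw [if_pos (by linarith : (1:ℝ) ≤ 1 + δ)]
    by_cases h : y1 ≤ 1 + δ
    · rw [if_pos h] at *; linarith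
    · rw [if_neg h] at *
      have : 1/lam > 0 := by positivity
      linarith
  · intro p hp hp1
    simp only [egfpU1, if_neg (by linarith : ¬ (1:ℝ) ≤ p)]
  · rw [hll]; linarith
end

section
/- In the two-player EGFP game with values (λ, 1), budgets (1+ε, 1), CTRs (1, 1/λ), λ > 2, ε ∈ (0, 1/2), no bid profile with b_{1,1} ≤ b_{2,1} ≤ 1 inducing the assignment where player 2 gets position 1 is a pure Nash equilibrium: for sufficiently small δ > 0, player 1 deviating to bid 1 + δ ≤ 1 + ε for position 1 gets utility λ − 1 − δ > 1, exceeding her equilibrium utility 1. -/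
theorem stmt7 (lam eps : ℝ) (hlam : 2 < lam) (heps0 : 0 < eps) (heps : eps < 1 / 2)
    (b11 b12 b21 b22 : ℝ) (hb : b11 ≤ b21) (hb21 : b21 ≤ 1)
    (δ : ℝ) (hδ0 : 0 < δ) (hδeps : δ ≤ eps) (hδ : δ < lam - 2) :
    egfpU1 lam (1 + δ) 0 b21 b22 = lam - 1 - δ ∧
    1 < lam - 1 - δ ∧
    (b11 < b21 → ¬ EgfpEq2 lam eps b11 b12 b21 b22) := by
  have h1 : b21 ≤ 1 + δ := by linarith
  have hu : egfpU1 lam (1 + δ) 0 b21 b22 = lam - 1 - δ := by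
    simp [egfpU1, h1]; ring
  refine ⟨hu, by linarith, fun hlt ⟨_, h12, _, _, _, _, hbr, _⟩ => ?_⟩
  have hfeas : egfpFeas1 eps (1 + δ) 0 b21 := by
    simp [egfpFeas1, h1]; linarith
  have := hbr (1 + δ) 0 (by linarith) le_rfl hfeas
  rw [hu] at this
  have hcur : egfpU1 lam b11 b12 b21 b22 = 1 - b12 := by
    simp [egfpU1, not_le.mpr hlt]
    rw [inv_mul_cancel₀ (by linarith : lam ≠ 0)]
  rw [hcur] at this
  linarith
end

section
/- The liquid price of anarchy of the GSP mechanism under the no-over assumption is at least 2: for every δ > 0 there exists a position game induced by GSP with a pure Nash equilibrium whose liquid welfare is smaller than the optimal liquid welfare divided by 2 − δ. -/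
/-- The liquid price of anarchy of GSP (under the no-over assumption) is at least 2:
for every δ > 0 there is a position game induced by GSP with a pure Nash equilibrium
whose liquid welfare, multiplied by 2 - δ, is still smaller than the optimal liquid
welfare. -/
theorem stmt8 (δ : ℝ) (hδ : 0 < δ) :
    ∃ lam eps b1 b2 : ℝ, 2 < lam ∧ 0 < eps ∧ eps < 1 / 2 ∧
      GspEq2 lam eps b1 b2 ∧
      0 < (if b2 ≤ b1 then LW12 lam eps else LW21 lam eps) ∧
      (2 - δ) * (if b2 ≤ b1 then LW12 lam eps else LW21 lam eps) <
        max (LW12 lam eps) (LW21 lam eps) := by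
  set t : ℝ := min δ 1 / 4 with ht
  have ht0 : 0 < t := by positivity
  have htle : t ≤ 1/4 := by
    have : min δ 1 ≤ 1 := min_le_right _ _
    simp only [ht]; linarith
  have htδ : t ≤ δ/4 := by
    have : min δ 1 ≤ δ := min_le_left _ _
    simp only [ht]; linarith
  refine ⟨2/t, t/2, 1, 0, ?_, by positivity, by linarith, ?_, ?_, ?_⟩
  · rw [lt_div_iff₀ ht0]; linarith
  · have hlam8 : (8:ℝ) ≤ 2/t := by
      rw [le_div_iff₀ ht0]; linarith
    refine ⟨by norm_num, le_refl 0, ?_, ?_, ?_, ?_⟩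
    · simp only [noOver1, if_pos (by norm_num : (0:ℝ) ≤ 1)]
      refine le_min ?_ ?_ <;> linarith
    · simp only [noOver2, if_pos (by norm_num : (0:ℝ) ≤ 1)]
      simp; positivity
    · intro y hy _
      simp only [gspU1, if_pos hy, if_pos (by norm_num : (0:ℝ) ≤ 1)]
      exact le_rfl
    · intro y hy hno
      by_cases hyb : y ≤ 1
      · simp only [gspU2, if_pos hyb, if_pos (by norm_num : (0:ℝ) ≤ 1)]
        exact le_rfl
      · exfalso
        simp only [noOver2, if_neg hyb] at hno
        have : (1:ℝ)*y ≤ 1 := le_trans hno (by norm_num)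
        linarith [not_le.mp hyb]
  · rw [if_pos (by norm_num : (0:ℝ) ≤ 1)]
    have : (0:ℝ) < 1 + t/2 := by linarith
    have h2 : (0:ℝ) < 1/(2/t) := by positivity
    unfold LW12
    have hmin1 : (0:ℝ) < min (1 * (2/t)) (1 + t/2) := by
      apply lt_min <;> [positivity; linarith]
    have hmin2 : (0:ℝ) < min (1/(2/t) * 1) 1 := by
      apply lt_min <;> [positivity; norm_num]
    linarith
  · rw [if_pos (by norm_num : (0:ℝ) ≤ 1)]
    have hlam8 : (8:ℝ) ≤ 2/t := by rw [le_div_iff₀ ht0]; linarith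
    have hinv : 1/(2/t) = t/2 := by
      rw [one_div_div]
    have hLW12 : LW12 (2/t) (t/2) = 1 + t := by
      unfold LW12
      rw [hinv]
      rw [min_eq_right (by linarith : 1 + t/2 ≤ 1 * (2/t)),
          min_eq_left (by linarith : t/2 * 1 ≤ 1)]
      ring
    have hLW21 : LW21 (2/t) (t/2) = 2 := by
      unfold LW21
      rw [hinv]
      have hne : (2/t : ℝ) ≠ 0 := by positivity
      rw [min_eq_left (by linarith : (1:ℝ)*1 ≤ 1 + t/2)]
      rw [show (t/2) * (2/t) = 1 by field_simp]
      norm_num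
    rw [hLW12, hLW21, max_eq_right (by linarith : 1 + t ≤ 2)]
    nlinarith [mul_pos hδ ht0]
end

section
/- The liquid price of stability of GSP, VCG, and EGFP is at least 2: for every δ > 0 there exists a position game (the two-player example with values (λ,1), budgets (1+ε,1), CTRs (1,1/λ)) in which every pure Nash equilibrium induces the assignment (1,2), whose liquid welfare is smaller than the optimal liquid welfare divided by 2 − δ. -/
lemma aux_gsp_ex (lam eps : ℝ) (h2 : 2 < lam) (he : 0 < eps) (he2 : eps < 1/2) :
    GspEq2 lam eps (1 + eps) 1 := by
  have hl0 : (0:ℝ) < lam := by linarith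
  have hinv : 1 / lam ≤ 1 := by rw [div_le_one hl0]; linarith
  have hinv0 : 0 < 1 / lam := by positivity
  refine ⟨by linarith, by norm_num, ?_, ?_, ?_, ?_⟩
  · simp only [noOver1, if_pos (by linarith : (1:ℝ) ≤ 1 + eps)]
    apply le_min <;> nlinarith
  · simp only [noOver2, if_pos (by linarith : (1:ℝ) ≤ 1 + eps)]
    apply le_min <;> nlinarith
  · intro y hy hno
    simp only [gspU1, if_pos (by linarith : (1:ℝ) ≤ 1 + eps)]
    split_ifs with h
    · linarith
    · have : (1/lam) * lam = 1 := by field_simp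
      rw [this]; linarith
  · intro y hy hno
    simp only [gspU2, if_pos (by linarith : (1:ℝ) ≤ 1 + eps)]
    split_ifs with h
    · linarith
    · exfalso
      simp only [noOver2, if_neg (not_le.mpr (not_le.mp h))] at hno
      push_neg at h
      have : y ≤ min (1*1) 1 := by nlinarith [hno]
      simp at this; linarith

lemma aux_gsp_uniq (lam eps b1 b2 : ℝ) (h2 : 2 < lam) (he : 0 ≤ eps) (h : GspEq2 lam eps b1 b2) :
    b2 ≤ b1 := by
  by_contra hlt
  push_neg at hlt
  obtain ⟨h1, h2', hn1, hn2, hd1, hd2⟩ := h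
  -- player 2 wins; b2 ≤ 1 from noOver2
  simp only [noOver2, if_neg (not_le.mpr hlt)] at hn2
  have hb2le : b2 ≤ 1 := by
    have := le_min_iff.mp hn2; linarith [this.1]
  -- player 1 deviates to y = b2
  have hfeas : noOver1 lam eps b2 b2 := by
    simp only [noOver1, if_pos le_rfl]
    apply le_min <;> nlinarith
  have := hd1 b2 h2' hfeas
  simp only [gspU1, if_pos le_rfl, if_neg (not_le.mpr hlt)] at this
  have hml : (1/lam) * lam = 1 := by field_simp
  rw [hml] at this
  nlinarith

lemma aux_vcg_ex (lam eps : ℝ) (h2 : 2 < lam) (he : 0 < eps) (he2 : eps < 1/2) :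
    VcgEq2 lam eps (1 + eps) 1 := by
  have hl0 : (0:ℝ) < lam := by linarith
  have hinv : 1 / lam ≤ 1 := by rw [div_le_one hl0]; linarith
  have hinv0 : 0 < 1 / lam := by positivity
  refine ⟨by linarith, by norm_num, ?_, ?_, ?_, ?_⟩
  · simp only [noOver1, if_pos (by linarith : (1:ℝ) ≤ 1 + eps)]
    apply le_min <;> nlinarith
  · simp only [noOver2, if_pos (by linarith : (1:ℝ) ≤ 1 + eps)]
    apply le_min <;> nlinarith
  · intro y hy hno
    simp only [vcgU1, if_pos (by linarith : (1:ℝ) ≤ 1 + eps)]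
    split_ifs with h
    · linarith
    · have hml : (1/lam) * lam = 1 := by field_simp
      rw [hml]; nlinarith
  · intro y hy hno
    simp only [vcgU2, if_pos (by linarith : (1:ℝ) ≤ 1 + eps)]
    split_ifs with h
    · linarith
    · exfalso
      simp only [noOver2, if_neg h] at hno
      push_neg at h
      have : y ≤ min (1*1) 1 := by nlinarith [hno]
      simp at this; linarith

lemma aux_vcg_uniq (lam eps b1 b2 : ℝ) (h2 : 2 < lam) (he : 0 ≤ eps) (h : VcgEq2 lam eps b1 b2) :
    b2 ≤ b1 := by
  by_contra hlt
  push_neg at hlt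
  obtain ⟨h1, h2', hn1, hn2, hd1, hd2⟩ := h
  have hl0 : (0:ℝ) < lam := by linarith
  have hinv0 : 0 < 1 / lam := by positivity
  simp only [noOver2, if_neg (not_le.mpr hlt)] at hn2
  have hb2le : b2 ≤ 1 := by
    have := le_min_iff.mp hn2; linarith [this.1]
  have hfeas : noOver1 lam eps b2 b2 := by
    simp only [noOver1, if_pos le_rfl]
    apply le_min <;> nlinarith
  have := hd1 b2 h2' hfeas
  simp only [vcgU1, if_pos le_rfl, if_neg (not_le.mpr hlt)] at this
  have hml : (1/lam) * lam = 1 := by field_simp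
  rw [hml] at this
  nlinarith

lemma aux_egfp_ex (lam eps : ℝ) (h2 : 2 < lam) (he : 0 < eps) :
    EgfpEq2 lam eps 1 0 1 0 := by
  have hl0 : (0:ℝ) < lam := by linarith
  have hinv0 : 0 < 1 / lam := by positivity
  refine ⟨by norm_num, le_rfl, by norm_num, le_rfl, ?_, ?_, ?_, ?_⟩
  · simp only [egfpFeas1, if_pos le_rfl]; linarith
  · simp only [egfpFeas2, if_pos le_rfl]; norm_num
  · intro y1 y2 hy1 hy2 hfeas
    simp only [egfpU1, if_pos le_rfl]
    split_ifs with h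
    · linarith
    · have hml : (1/lam) * lam = 1 := by field_simp
      rw [hml]; linarith
  · intro y1 y2 hy1 hy2 hfeas
    simp only [egfpU2, if_pos le_rfl]
    split_ifs with h
    · linarith
    · exfalso
      simp only [egfpFeas2, if_neg h] at hfeas
      push_neg at h
      linarith

lemma aux_egfp_uniq (lam eps b11 b12 b21 b22 : ℝ) (h2 : 2 < lam) (he : 0 ≤ eps)
    (h : EgfpEq2 lam eps b11 b12 b21 b22) : b21 ≤ b11 := by
  by_contra hlt
  push_neg at hlt
  obtain ⟨h11, h12, h21, h22, hf1, hf2, hd1, hd2⟩ := h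
  simp only [egfpFeas2, if_neg (not_le.mpr hlt)] at hf2
  have hfeas : egfpFeas1 eps b21 0 b21 := by
    simp only [egfpFeas1, if_pos le_rfl]; linarith
  have := hd1 b21 0 h21 le_rfl hfeas
  simp only [egfpU1, if_pos le_rfl, if_neg (not_le.mpr hlt)] at this
  have hml : (1/lam) * lam = 1 := by field_simp
  rw [hml] at this
  nlinarith

/-- The liquid price of stability of GSP, VCG and EGFP is at least 2: for every δ > 0
there is a two-player position game in which equilibria exist, every pure Nash
equilibrium of each mechanism induces the assignment (1,2), and the liquid welfare of
that assignment times (2 - δ) is smaller than the optimal liquid welfare. -/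
theorem stmt9 (δ : ℝ) (hδ : 0 < δ) :
    ∃ lam eps : ℝ, 2 < lam ∧ 0 < eps ∧ eps < 1 / 2 ∧
      (∃ b1 b2 : ℝ, GspEq2 lam eps b1 b2) ∧
      (∀ b1 b2 : ℝ, GspEq2 lam eps b1 b2 → b2 ≤ b1) ∧
      (∃ b1 b2 : ℝ, VcgEq2 lam eps b1 b2) ∧
      (∀ b1 b2 : ℝ, VcgEq2 lam eps b1 b2 → b2 ≤ b1) ∧
      (∃ b11 b12 b21 b22 : ℝ, EgfpEq2 lam eps b11 b12 b21 b22) ∧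
      (∀ b11 b12 b21 b22 : ℝ, EgfpEq2 lam eps b11 b12 b21 b22 → b21 ≤ b11) ∧
      0 < LW12 lam eps ∧
      (2 - δ) * LW12 lam eps < max (LW12 lam eps) (LW21 lam eps) := by
  set d := min δ 1 with hd
  have hd0 : 0 < d := lt_min hδ one_pos
  have hd1 : d ≤ 1 := min_le_right _ _
  have hdδ : d ≤ δ := min_le_left _ _
  refine ⟨8 / d, d / 8, ?_, by positivity, ?_, ?_, ?_, ?_, ?_, ?_, ?_, ?_, ?_⟩
  case _ => rw [lt_div_iff₀ hd0]; nlinarith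
  case _ => rw [div_lt_iff₀ (by norm_num : (0:ℝ) < 8)]; nlinarith
  all_goals
    have hlam2 : (2:ℝ) < 8 / d := by rw [lt_div_iff₀ hd0]; nlinarith
    have heps0 : (0:ℝ) < d / 8 := by positivity
    have heps2 : d / 8 < 1/2 := by rw [div_lt_iff₀ (by norm_num : (0:ℝ) < 8)]; nlinarith
  · exact ⟨_, _, aux_gsp_ex _ _ hlam2 heps0 heps2⟩
  · exact fun b1 b2 h => aux_gsp_uniq _ _ _ _ hlam2 heps0.le h
  · exact ⟨_, _, aux_vcg_ex _ _ hlam2 heps0 heps2⟩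
  · exact fun b1 b2 h => aux_vcg_uniq _ _ _ _ hlam2 heps0.le h
  · exact ⟨_, _, _, _, aux_egfp_ex _ _ hlam2 heps0⟩
  · exact fun b11 b12 b21 b22 h => aux_egfp_uniq _ _ _ _ _ _ hlam2 heps0.le h
  all_goals
    have hl0 : (0:ℝ) < 8 / d := by linarith
    have hinv : 1 / (8 / d) = d / 8 := by rw [one_div_div]
    have hLW12 : LW12 (8/d) (d/8) = 1 + d/8 + d/8 := by
      rw [LW12, hinv]
      rw [min_eq_right (by nlinarith : (1:ℝ) + d/8 ≤ 1 * (8/d)),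
          min_eq_left (by nlinarith : d/8 * 1 ≤ 1)]
      ring
    have hLW21 : LW21 (8/d) (d/8) = 2 := by
      rw [LW21, hinv]
      have hmul : d/8 * (8/d) = 1 := by field_simp
      rw [min_eq_left (by nlinarith : (1:ℝ) * 1 ≤ 1 + d/8), min_eq_left hmul.le, hmul]
      norm_num
  · rw [hLW12]; nlinarith
  · rw [hLW12, hLW21]
    have h2 : (2 - δ) * (1 + d/8 + d/8) < 2 := by nlinarith
    calc (2-δ) * (1 + d/8 + d/8) < 2 := h2
      _ ≤ max (1 + d/8 + d/8) 2 := le_max_right _ _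
end

section
/- Suppose at a pure Nash equilibrium b of an EGFP position game, player i satisfies α_{σᵢ(b)} vᵢ ≤ cᵢ, and let oᵢ be player i's position in an optimal assignment, with j = π_{oᵢ}(b) the player at position oᵢ at equilibrium. Then for every γ > 0, uᵢ(b) ≥ min{α_{oᵢ} vᵢ, cᵢ} − min{α_{oᵢ} vⱼ, cⱼ} − γ. -/
/-! General position games with `n` players and `n` positions.
`α j` is the CTR of position `j`, `v i` and `c i` are the value and budget of player
`i`, an assignment is a permutation `σ` sending each player to her position, and
`σ.symm j` is the player occupying position `j`. -/

/-- A ranking `σ` is consistent with scalar bids `b` if players in earlier positions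
bid at least as much (non-increasing bid order). -/
def RankConsistent {n : ℕ} (b : Fin n → ℝ) (σ : Equiv.Perm (Fin n)) : Prop :=
  ∀ i j : Fin n, σ i < σ j → b j ≤ b i

/-- The bid of the player ranked just below player `i` (zero for the last position). -/
noncomputable def nextBid {n : ℕ} (b : Fin n → ℝ) (σ : Equiv.Perm (Fin n)) (i : Fin n) : ℝ :=
  if h : (σ i : ℕ) + 1 < n then b (σ.symm ⟨(σ i : ℕ) + 1, h⟩) else 0

/-- GSP utility: player `i` gets CTR of her position times her value, and pays the
next highest bid per click. -/
noncomputable def gspUtil {n : ℕ} (α v : Fin n → ℝ) (b : Fin n → ℝ)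
    (σ : Equiv.Perm (Fin n)) (i : Fin n) : ℝ :=
  α (σ i) * v i - α (σ i) * nextBid b σ i

/-- The no-over assumption for a bid `y` of player `i` occupying position `p`:
CTR times bid is at most the minimum of the player's total value and her budget. -/
def NoOverAt {n : ℕ} (α v c : Fin n → ℝ) (i p : Fin n) (y : ℝ) : Prop :=
  α p * y ≤ min (α p * v i) (c i)

/-- Pure Nash equilibrium of the GSP position game under the no-over assumption:
bids are non-negative, `σ` ranks the players by bids, everyone satisfies no-over, and
no player can improve her utility by a unilateral no-over deviation, whatever
consistent ranking results. -/
def GspEquilibrium {n : ℕ} (α v c : Fin n → ℝ) (b : Fin n → ℝ)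
    (σ : Equiv.Perm (Fin n)) : Prop :=
  (∀ i, 0 ≤ b i) ∧ RankConsistent b σ ∧ (∀ i, NoOverAt α v c i (σ i) (b i)) ∧
    ∀ (i : Fin n) (y : ℝ) (τ : Equiv.Perm (Fin n)), 0 ≤ y →
      RankConsistent (Function.update b i y) τ → NoOverAt α v c i (τ i) y →
        gspUtil α v (Function.update b i y) τ i ≤ gspUtil α v b σ i

/-- Total VCG payment of player `i`: the externality `∑_{k > σ i} b_{π(k)} (α_{k-1} - α_k)`. -/
noncomputable def vcgPay {n : ℕ} (α : Fin n → ℝ) (b : Fin n → ℝ)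
    (σ : Equiv.Perm (Fin n)) (i : Fin n) : ℝ :=
  ∑ k ∈ Finset.univ.filter (fun k : Fin n => σ i < k),
    b (σ.symm k) * (α ⟨(k : ℕ) - 1, lt_of_le_of_lt (Nat.sub_le _ _) k.isLt⟩ - α k)

/-- VCG utility of player `i`. -/
noncomputable def vcgUtil {n : ℕ} (α v : Fin n → ℝ) (b : Fin n → ℝ)
    (σ : Equiv.Perm (Fin n)) (i : Fin n) : ℝ :=
  α (σ i) * v i - vcgPay α b σ i

/-- Pure Nash equilibrium of the VCG position game under the no-over assumption. -/
def VcgEquilibrium {n : ℕ} (α v c : Fin n → ℝ) (b : Fin n → ℝ)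
    (σ : Equiv.Perm (Fin n)) : Prop :=
  (∀ i, 0 ≤ b i) ∧ RankConsistent b σ ∧ (∀ i, NoOverAt α v c i (σ i) (b i)) ∧
    ∀ (i : Fin n) (y : ℝ) (τ : Equiv.Perm (Fin n)), 0 ≤ y →
      RankConsistent (Function.update b i y) τ → NoOverAt α v c i (τ i) y →
        vcgUtil α v (Function.update b i y) τ i ≤ vcgUtil α v b σ i

/-- EGFP consistency: positions are allocated sequentially, so the player winning
position `p` bids at least as much for `p` as every player allocated at `p` or later. -/
def EgfpConsistent {n : ℕ} (b : Fin n → Fin n → ℝ) (σ : Equiv.Perm (Fin n)) : Prop :=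
  ∀ (p i : Fin n), p ≤ σ i → b i p ≤ b (σ.symm p) p

/-- EGFP utility: first-price payments, each winner pays her own bid for her position. -/
noncomputable def egfpUtil {n : ℕ} (α v : Fin n → ℝ) (b : Fin n → Fin n → ℝ)
    (σ : Equiv.Perm (Fin n)) (i : Fin n) : ℝ :=
  α (σ i) * v i - b i (σ i)

/-- Pure Nash equilibrium of the EGFP position game, with payments within budgets. -/
def EgfpEquilibrium {n : ℕ} (α v c : Fin n → ℝ) (b : Fin n → Fin n → ℝ)
    (σ : Equiv.Perm (Fin n)) : Prop :=
  (∀ i p, 0 ≤ b i p) ∧ EgfpConsistent b σ ∧ (∀ i, b i (σ i) ≤ c i) ∧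
    ∀ (i : Fin n) (y : Fin n → ℝ) (τ : Equiv.Perm (Fin n)), (∀ p, 0 ≤ y p) →
      EgfpConsistent (Function.update b i y) τ → y (τ i) ≤ c i →
        egfpUtil α v (Function.update b i y) τ i ≤ egfpUtil α v b σ i

/-- Liquid welfare of the assignment `σ`: each player's value is capped by her budget. -/
noncomputable def liquidWelfare {n : ℕ} (α v c : Fin n → ℝ) (σ : Equiv.Perm (Fin n)) : ℝ :=
  ∑ i, min (α (σ i) * v i) (c i)



lemma tail_greedy {n : ℕ} (b' : Fin n → Fin n → ℝ) (d0 : Fin n) :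
    ∀ (d : ℕ), ∀ (m : ℕ) (R : Finset (Fin n)), m + d = n → R.card = d →
      ∃ f : ℕ → Fin n,
        (∀ p q, m ≤ p → p < q → q < n → f p ≠ f q) ∧
        (∀ p, m ≤ p → p < n → f p ∈ R) ∧
        (∀ p (k : Fin n), m ≤ p → ∀ hpn : p < n, k ∈ R →
          (∀ q, m ≤ q → q < p → f q ≠ k) →
          b' k ⟨p, hpn⟩ ≤ b' (f p) ⟨p, hpn⟩) := by
  intro d
  induction d with
  | zero =>
    intro m R hm hcard
    exact ⟨fun _ => d0, fun p q hp hpq hq => (by omega : False).elim,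
      fun p hp hpn => (by omega : False).elim,
      fun p k hp hpn _ _ => (by omega : False).elim⟩
  | succ d ih =>
    intro m R hm hcard
    have hmn : m < n := by omega
    have hRne : R.Nonempty := by rw [← Finset.card_pos, hcard]; omega
    obtain ⟨u, huR, humax⟩ := R.exists_max_image (fun k => b' k ⟨m, hmn⟩) hRne
    obtain ⟨f', h1, h2, h3⟩ := ih (m+1) (R.erase u) (by omega)
      (by rw [Finset.card_erase_of_mem huR, hcard]; omega)
    refine ⟨fun q => if q = m then u else f' q, ?_, ?_, ?_⟩
    · intro p q hp hpq hq
      by_cases hpm : p = m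
      · have hqm : q ≠ m := by omega
        simp only [hpm, if_pos rfl, if_neg hqm]
        exact fun h => (Finset.ne_of_mem_erase (h2 q (by omega) hq)) h.symm
      · have hqm : q ≠ m := by omega
        simp only [if_neg hpm, if_neg hqm]
        exact h1 p q (by omega) hpq hq
    · intro p hp hpn
      by_cases hpm : p = m
      · simpa [hpm] using huR
      · simp only [if_neg hpm]
        exact Finset.mem_of_mem_erase (h2 p (by omega) hpn)
    · intro p k hp hpn hkR hknot
      by_cases hpm : p = m
      · subst hpm
        simp only [if_pos rfl]
        exact humax k hkR
      · simp only [if_neg hpm]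
        have hku : k ≠ u := by
          have := hknot m (le_refl m) (by omega)
          simp only [if_pos rfl] at this
          exact fun h => this h.symm
        refine h3 p k (by omega) hpn (Finset.mem_erase.mpr ⟨hku, hkR⟩) ?_
        intro q hq hq'
        have := hknot q (by omega) hq'
        simpa only [if_neg (by omega : q ≠ m)] using this


lemma assemble {n : ℕ} (b' : Fin n → Fin n → ℝ) (f : ℕ → Fin n)
    (hinj : ∀ p q, p < q → q < n → f p ≠ f q)
    (hc : ∀ p (k : Fin n), ∀ hpn : p < n, (∀ q, q < p → f q ≠ k) →
      b' k ⟨p, hpn⟩ ≤ b' (f p) ⟨p, hpn⟩) :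
    ∃ τ : Equiv.Perm (Fin n), (∀ p : Fin n, τ.symm p = f p) ∧ EgfpConsistent b' τ := by
  have hinj' : Function.Injective (fun p : Fin n => f p) := by
    intro a b hab
    by_contra h
    rcases lt_or_gt_of_ne h with hlt | hlt
    · exact hinj a b (by exact_mod_cast hlt) b.isLt hab
    · exact hinj b a (by exact_mod_cast hlt) a.isLt hab.symm
  have hbij := Finite.injective_iff_bijective.mp hinj'
  refine ⟨(Equiv.ofBijective _ hbij).symm, fun p => by simp [Equiv.ofBijective], ?_⟩
  intro p k hpk
  have hkval : f ((Equiv.ofBijective _ hbij).symm k : ℕ) = k :=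
    (Equiv.ofBijective _ hbij).apply_symm_apply k
  have hnot : ∀ q, q < (p : ℕ) → f q ≠ k := by
    intro q hq hqk
    have hle : (p : ℕ) ≤ ((Equiv.ofBijective _ hbij).symm k : ℕ) := Fin.le_def.mp hpk
    exact hinj q _ (by omega) (Fin.isLt _) (hqk.trans hkval.symm)
  exact hc (p : ℕ) k p.isLt hnot


lemma pre_greedy {n : ℕ} (b : Fin n → Fin n → ℝ) (σ : Equiv.Perm (Fin n))
    (hcons : EgfpConsistent b σ) (hnn : ∀ k p, 0 ≤ b k p) (i o : Fin n) :
    ∀ (d : ℕ), ∀ (p : ℕ) (R : Finset (Fin n)), p + d = n → R.card = d → p ≤ (o : ℕ) →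
      i ∈ R → (∀ k ∈ R, k ≠ i → p ≤ (σ k : ℕ)) →
      ∃ f : ℕ → Fin n,
        (∀ p' q, p ≤ p' → p' < q → q < n → f p' ≠ f q) ∧
        (∀ p', p ≤ p' → p' < n → f p' ∈ R) ∧
        (∀ p' (k : Fin n), p ≤ p' → ∀ hpn : p' < n, k ∈ R →
          (∀ q, p ≤ q → q < p' → f q ≠ k) →
          (Function.update b i (fun q => if q = o then b (σ.symm o) o else 0)) k ⟨p', hpn⟩ ≤
          (Function.update b i (fun q => if q = o then b (σ.symm o) o else 0)) (f p') ⟨p', hpn⟩) ∧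
        f (o : ℕ) = i := by
  set y : Fin n → ℝ := fun q => if q = o then b (σ.symm o) o else 0 with hy
  set b' : Fin n → Fin n → ℝ := Function.update b i y with hb'
  have hb'i : ∀ q, b' i q = y q := by intro q; rw [hb', Function.update_self]
  have hb'k : ∀ k, k ≠ i → b' k = b k := by
    intro k hk; rw [hb', Function.update_of_ne hk]
  intro d
  induction d with
  | zero =>
    intro p R hm hcard hpo hiR hinv
    have : R = ∅ := Finset.card_eq_zero.mp hcard
    rw [this] at hiR
    exact absurd hiR (Finset.notMem_empty i)
  | succ d ih =>
    intro p R hm hcard hpo hiR hinv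
    have hpn : p < n := by omega
    by_cases hpeq : p = (o : ℕ)
    · -- position o: allocate to i, then greedy tail
      obtain ⟨f', h1, h2, h3⟩ := tail_greedy b' i d (p+1) (R.erase i) (by omega)
        (by rw [Finset.card_erase_of_mem hiR, hcard]; omega)
      have hmax : ∀ k ∈ R, b' k ⟨p, hpn⟩ ≤ b' i ⟨p, hpn⟩ := by
        intro k hk
        have hposo : (⟨p, hpn⟩ : Fin n) = o := by
          apply Fin.ext; exact hpeq
        by_cases hki : k = i
        · subst hki; exact le_refl _
        · rw [hb'k k hki, hb'i, hposo, hy]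
          simp only [if_pos rfl]
          have hle : o ≤ σ k := by
            rw [Fin.le_def]; exact hpeq ▸ hinv k hk hki
          exact hcons o k hle
      refine ⟨fun q => if q = p then i else f' q, ?_, ?_, ?_, ?_⟩
      · intro p' q hp' hpq hq
        by_cases hp'm : p' = p
        · have hqm : q ≠ p := by omega
          simp only [hp'm, if_pos rfl, if_neg hqm]
          exact fun h => (Finset.ne_of_mem_erase (h2 q (by omega) hq)) h.symm
        · have hqm : q ≠ p := by omega
          simp only [if_neg hp'm, if_neg hqm]
          exact h1 p' q (by omega) hpq hq
      · intro p' hp' hpn'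
        by_cases hp'm : p' = p
        · simp only [hp'm, if_pos rfl]; exact hiR
        · simp only [if_neg hp'm]
          exact Finset.mem_of_mem_erase (h2 p' (by omega) hpn')
      · intro p' k hp' hpn' hkR hknot
        by_cases hp'm : p' = p
        · subst hp'm
          simp only [if_pos rfl]
          exact hmax k hkR
        · simp only [if_neg hp'm]
          have hki : k ≠ i := by
            have := hknot p (le_refl p) (by omega)
            simp only [if_pos rfl] at this
            exact fun h => this h.symm
          refine h3 p' k (by omega) hpn' (Finset.mem_erase.mpr ⟨hki, hkR⟩) ?_
          intro q hq hq'
          have := hknot q (by omega) hq'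
          simpa only [if_neg (by omega : q ≠ p)] using this
      · show (if (o : ℕ) = p then i else f' (o : ℕ)) = i
        rw [if_pos hpeq.symm]
    · -- position p < o: pick a non-i winner preserving the invariant
      have hplt : p < (o : ℕ) := by omega
      have hEne : (R.erase i).Nonempty := by
        rw [← Finset.card_pos, Finset.card_erase_of_mem hiR, hcard]
        have : (o : ℕ) < n := o.isLt
        omega
      obtain ⟨w, hw, hwmax⟩ := (R.erase i).exists_max_image (fun k => b' k ⟨p, hpn⟩) hEne
      have hposne : (⟨p, hpn⟩ : Fin n) ≠ o := by
        intro h; exact hpeq (congrArg Fin.val h)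
      have hb'ip : b' i ⟨p, hpn⟩ = 0 := by
        rw [hb'i, hy]; simp only [if_neg hposne]
      have hu : ∃ u ∈ R.erase i, (∀ k ∈ R, b' k ⟨p, hpn⟩ ≤ b' u ⟨p, hpn⟩) ∧
          (∀ k ∈ R, k ≠ i → k ≠ u → p + 1 ≤ (σ k : ℕ)) := by
        by_cases hs : σ.symm ⟨p, hpn⟩ ∈ R.erase i
        · refine ⟨σ.symm ⟨p, hpn⟩, hs, ?_, ?_⟩
          · intro k hk
            have hsi : σ.symm ⟨p, hpn⟩ ≠ i := Finset.ne_of_mem_erase hs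
            rw [hb'k _ hsi]
            by_cases hki : k = i
            · subst hki; rw [hb'ip]; exact hnn _ _
            · rw [hb'k k hki]
              have hle : (⟨p, hpn⟩ : Fin n) ≤ σ k := by
                rw [Fin.le_def]; exact hinv k hk hki
              exact hcons ⟨p, hpn⟩ k hle
          · intro k hk hki hku
            have := hinv k hk hki
            rcases Nat.lt_or_ge p (σ k : ℕ) with h | h
            · omega
            · exfalso
              have : (σ k : ℕ) = p := by omega
              have : σ k = ⟨p, hpn⟩ := Fin.ext this
              exact hku (by rw [← this, Equiv.symm_apply_apply])
        · refine ⟨w, hw, ?_, ?_⟩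
          · intro k hk
            by_cases hki : k = i
            · subst hki; rw [hb'ip, hb'k _ (Finset.ne_of_mem_erase hw)]
              exact hnn _ _
            · exact hwmax k (Finset.mem_erase.mpr ⟨hki, hk⟩)
          · intro k hk hki hku
            have := hinv k hk hki
            rcases Nat.lt_or_ge p (σ k : ℕ) with h | h
            · omega
            · exfalso
              have hkp : (σ k : ℕ) = p := by omega
              have hkeq : k = σ.symm ⟨p, hpn⟩ := by
                rw [← Equiv.symm_apply_apply σ k]
                congr 1
                exact Fin.ext hkp
              exact hs (hkeq ▸ Finset.mem_erase.mpr ⟨hki, hk⟩)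
      obtain ⟨u, huE, humax, hinv'⟩ := hu
      have hui : u ≠ i := Finset.ne_of_mem_erase huE
      have huR : u ∈ R := Finset.mem_of_mem_erase huE
      obtain ⟨f', h1, h2, h3, h4⟩ := ih (p+1) (R.erase u) (by omega)
        (by rw [Finset.card_erase_of_mem huR, hcard]; omega) (by omega)
        (Finset.mem_erase.mpr ⟨fun h => hui h.symm, hiR⟩)
        (fun k hk hki => hinv' k (Finset.mem_of_mem_erase hk) hki (Finset.ne_of_mem_erase hk))
      refine ⟨fun q => if q = p then u else f' q, ?_, ?_, ?_, ?_⟩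
      · intro p' q hp' hpq hq
        by_cases hp'm : p' = p
        · have hqm : q ≠ p := by omega
          simp only [hp'm, if_pos rfl, if_neg hqm]
          exact fun h => (Finset.ne_of_mem_erase (h2 q (by omega) hq)) h.symm
        · have hqm : q ≠ p := by omega
          simp only [if_neg hp'm, if_neg hqm]
          exact h1 p' q (by omega) hpq hq
      · intro p' hp' hpn'
        by_cases hp'm : p' = p
        · simp only [hp'm, if_pos rfl]; exact huR
        · simp only [if_neg hp'm]
          exact Finset.mem_of_mem_erase (h2 p' (by omega) hpn')
      · intro p' k hp' hpn' hkR hknot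
        by_cases hp'm : p' = p
        · subst hp'm
          simp only [if_pos rfl]
          exact humax k hkR
        · simp only [if_neg hp'm]
          have hku : k ≠ u := by
            have := hknot p (le_refl p) (by omega)
            simp only [if_pos rfl] at this
            exact fun h => this h.symm
          refine h3 p' k (by omega) hpn' (Finset.mem_erase.mpr ⟨hku, hkR⟩) ?_
          intro q hq hq'
          have := hknot q (by omega) hq'
          simpa only [if_neg (by omega : q ≠ p)] using this
      · show (if (o : ℕ) = p then u else f' (o : ℕ)) = i
        rw [if_neg (fun h => hpeq h.symm)]
        exact h4


lemma util_nonneg {n : ℕ} (α v c : Fin n → ℝ) (hαpos : ∀ j, 0 < α j)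
    (hv : ∀ i, 0 ≤ v i) (hc : ∀ i, 0 ≤ c i)
    (b : Fin n → Fin n → ℝ) (σ : Equiv.Perm (Fin n)) (heq : EgfpEquilibrium α v c b σ)
    (k : Fin n) : 0 ≤ egfpUtil α v b σ k := by
  obtain ⟨f, h1, h2, h3⟩ := tail_greedy (Function.update b k (fun _ => (0:ℝ))) k n 0
    Finset.univ (by omega) (by simp)
  obtain ⟨τ, hτs, hτc⟩ := assemble (Function.update b k (fun _ => (0:ℝ))) f
    (fun p q hpq hq => h1 p q (Nat.zero_le _) hpq hq)
    (fun p k' hpn hq => h3 p k' (Nat.zero_le _) hpn (Finset.mem_univ _) (fun q _ hq' => hq q hq'))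
  have hb := heq.2.2.2 k (fun _ => 0) τ (fun _ => le_refl 0) hτc (by simpa using hc k)
  have hval : egfpUtil α v (Function.update b k (fun _ => (0:ℝ))) τ k = α (τ k) * v k := by
    unfold egfpUtil
    rw [Function.update_self]
    ring
  rw [hval] at hb
  have := mul_nonneg (le_of_lt (hαpos (τ k))) (hv k)
  linarith


/-- At a pure Nash equilibrium of an EGFP position game, if player i's equilibrium
value is within her budget, then for any position o (her position in an optimal
assignment), with j = σ.symm o the equilibrium occupant of o, player i's utility is at
least min{α_o v_i, c_i} - min{α_o v_j, c_j} - γ for all γ > 0. -/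
theorem stmt12 {n : ℕ} (α v c : Fin n → ℝ) (hα : Antitone α) (hαpos : ∀ j, 0 < α j)
    (hv : ∀ i, 0 ≤ v i) (hc : ∀ i, 0 ≤ c i)
    (b : Fin n → Fin n → ℝ) (σ : Equiv.Perm (Fin n)) (heq : EgfpEquilibrium α v c b σ)
    (i : Fin n) (hi : α (σ i) * v i ≤ c i) (o : Fin n) (γ : ℝ) (hγ : 0 < γ) :
    egfpUtil α v b σ i ≥
      min (α o * v i) (c i) - min (α o * v (σ.symm o)) (c (σ.symm o)) - γ := by
  have hsj : σ (σ.symm o) = o := Equiv.apply_symm_apply σ o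
  have hBvj : b (σ.symm o) o ≤ α o * v (σ.symm o) := by
    have := util_nonneg α v c hαpos hv hc b σ heq (σ.symm o)
    unfold egfpUtil at this
    rw [hsj] at this
    linarith
  have hBcj : b (σ.symm o) o ≤ c (σ.symm o) := by
    have := heq.2.2.1 (σ.symm o)
    rwa [hsj] at this
  have hui0 := util_nonneg α v c hαpos hv hc b σ heq i
  rw [ge_iff_le]
  by_cases hcase : min (α o * v i) (c i) - min (α o * v (σ.symm o)) (c (σ.symm o)) - γ ≤ 0
  · linarith
  · push_neg at hcase
    have hBmin : b (σ.symm o) o ≤ min (α o * v (σ.symm o)) (c (σ.symm o)) := le_min hBvj hBcj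
    have hBci : b (σ.symm o) o ≤ c i := by
      have h1 : min (α o * v i) (c i) ≤ c i := min_le_right _ _
      linarith
    obtain ⟨f, h1, h2, h3, h4⟩ := pre_greedy b σ heq.2.1 heq.1 i o n 0 Finset.univ
      (by omega) (by simp) (Nat.zero_le _) (Finset.mem_univ _) (fun _ _ _ => Nat.zero_le _)
    obtain ⟨τ, hτs, hτc⟩ := assemble
      (Function.update b i (fun q => if q = o then b (σ.symm o) o else 0)) f
      (fun p q hpq hq => h1 p q (Nat.zero_le _) hpq hq)
      (fun p k hpn hq => h3 p k (Nat.zero_le _) hpn (Finset.mem_univ _) (fun q _ hq' => hq q hq'))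
    have hτi : τ i = o := by
      have h : τ.symm o = i := (hτs o).trans h4
      exact ((Equiv.symm_apply_eq τ).mp h).symm
    have hynn : ∀ p, 0 ≤ (fun q => if q = o then b (σ.symm o) o else 0) p := by
      intro p
      by_cases h : p = o
      · simp only [h, if_pos rfl]; exact heq.1 _ _
      · simp only [if_neg h]; exact le_refl 0
    have hbound := heq.2.2.2 i (fun q => if q = o then b (σ.symm o) o else 0) τ hynn hτc
      (by rw [hτi]; simp only [if_pos rfl]; exact hBci)
    have hdevval : egfpUtil α v
        (Function.update b i (fun q => if q = o then b (σ.symm o) o else 0)) τ i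
        = α o * v i - b (σ.symm o) o := by
      unfold egfpUtil
      rw [hτi, Function.update_self]
      simp
    rw [hdevval] at hbound
    have hmini : min (α o * v i) (c i) ≤ α o * v i := min_le_left _ _
    linarith
end

section
/- Let σ(b) be an assignment and o an optimal assignment for a position game with CTRs αⱼ, values vᵢ, budgets cᵢ. Suppose that for every player i with α_{σᵢ(b)} vᵢ ≤ cᵢ and every γ > 0, α_{σᵢ(b)} vᵢ ≥ min{α_{oᵢ} vᵢ, cᵢ} − min{α_{oᵢ} v_{π_{oᵢ}(b)}, c_{π_{oᵢ}(b)}} − γ. Then 2·LW(σ(b)) ≥ OPT, i.e., the liquid welfare of σ(b) is at least half the optimal liquid welfare. -/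
/-- If for every player i whose value at assignment σ is within budget and every γ > 0
the inequality α_{σ i} v_i ≥ min{α_{o i} v_i, c_i} - min{α_{o i} v_{π_{o i}}, c_{π_{o i}}} - γ
holds (π_{o i} = σ.symm (o i) being the player occupying position o i under σ), then
the liquid welfare of σ is at least half the liquid welfare of the assignment o. -/
theorem stmt13 {n : ℕ} (α v c : Fin n → ℝ) (hαpos : ∀ j, 0 < α j)
    (hv : ∀ i, 0 ≤ v i) (hc : ∀ i, 0 ≤ c i) (σ o : Equiv.Perm (Fin n))
    (h : ∀ i : Fin n, α (σ i) * v i ≤ c i → ∀ γ : ℝ, 0 < γ →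
      α (σ i) * v i ≥
        min (α (o i) * v i) (c i) - min (α (o i) * v (σ.symm (o i))) (c (σ.symm (o i))) - γ) :
    2 * liquidWelfare α v c σ ≥ liquidWelfare α v c o := by
  classical
  set f : Fin n → ℝ := fun k => min (α (σ k) * v k) (c k) with hf
  have hfnn : ∀ k, 0 ≤ f k := fun k =>
    le_min (mul_nonneg (hαpos _).le (hv _)) (hc _)
  have key : ∀ i : Fin n,
      min (α (o i) * v i) (c i) ≤ f i + f (σ.symm (o i)) := by
    intro i
    have hσo : σ (σ.symm (o i)) = o i := σ.apply_symm_apply _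
    by_cases hbud : α (σ i) * v i ≤ c i
    · have h1 : min (α (o i) * v i) (c i)
          - min (α (o i) * v (σ.symm (o i))) (c (σ.symm (o i)))
          ≤ α (σ i) * v i := by
        refine le_of_forall_pos_le_add fun γ hγ => ?_
        have := h i hbud γ hγ
        linarith
      have hmin : f i = α (σ i) * v i := min_eq_left hbud
      have : f (σ.symm (o i))
          = min (α (o i) * v (σ.symm (o i))) (c (σ.symm (o i))) := by
        simp [hf, hσo]
      linarith
    · have hmin : f i = c i := min_eq_right (le_of_not_ge hbud)
      have h1 : min (α (o i) * v i) (c i) ≤ c i := min_le_right _ _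
      have := hfnn (σ.symm (o i))
      linarith
  have hsum : liquidWelfare α v c o ≤ ∑ i, (f i + f (σ.symm (o i))) :=
    Finset.sum_le_sum fun i _ => key i
  have hre : ∑ i, f (σ.symm (o i)) = ∑ i, f i :=
    Equiv.sum_comp (o.trans σ.symm) f
  have : ∑ i, (f i + f (σ.symm (o i))) = 2 * liquidWelfare α v c σ := by
    rw [Finset.sum_add_distrib, hre]
    simp [liquidWelfare, hf]; ring
  linarith
end

section
/- The liquid price of anarchy of GSP under the no-over assumption is at most 2: for every position game induced by GSP and every pure Nash equilibrium b, 2·LW(σ(b)) ≥ OPT. -/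
namespace Stmt14Aux

variable {n : ℕ}

def cycFun (p s : Fin n) (q : Fin n) : Fin n :=
  if (q : ℕ) = (s : ℕ) then p
  else if h : (p : ℕ) ≤ (q : ℕ) ∧ (q : ℕ) < (s : ℕ) then
    ⟨(q : ℕ) + 1, by have := s.isLt; omega⟩
  else q

lemma cycFun_inj (p s : Fin n) (hps : (p : ℕ) < (s : ℕ)) :
    Function.Injective (cycFun p s) := by
  intro a d h
  have ha := a.isLt; have hd := d.isLt; have hs := s.isLt
  unfold cycFun at h
  apply Fin.ext
  split_ifs at h <;> simp only [Fin.ext_iff, Fin.val_mk] at h <;> omega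

noncomputable def cycPerm (p s : Fin n) (hps : (p : ℕ) < (s : ℕ)) : Equiv.Perm (Fin n) :=
  Equiv.ofBijective _ (Finite.injective_iff_bijective.mp (cycFun_inj p s hps))

@[simp] lemma cycPerm_apply (p s : Fin n) (hps : (p : ℕ) < (s : ℕ)) (q : Fin n) :
    cycPerm p s hps q = cycFun p s q := rfl

lemma rank_pos {b : Fin n → ℝ} {σ : Equiv.Perm (Fin n)} (hr : RankConsistent b σ)
    {q r : Fin n} (h : (q : ℕ) ≤ (r : ℕ)) : b (σ.symm r) ≤ b (σ.symm q) := by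
  rcases eq_or_lt_of_le h with h | h
  · rw [Fin.ext h]
  · apply hr (σ.symm q) (σ.symm r)
    rw [Equiv.apply_symm_apply, Equiv.apply_symm_apply]
    exact Fin.lt_def.mpr h

lemma core {b : Fin n → ℝ} {σ : Equiv.Perm (Fin n)} (hr : RankConsistent b σ)
    {p s : Fin n} (hps : (p : ℕ) < (s : ℕ)) {a d : Fin n}
    (h : cycFun p s a < cycFun p s d) :
    (if (d : ℕ) = (s : ℕ) then b (σ.symm p) else b (σ.symm d)) ≤
      (if (a : ℕ) = (s : ℕ) then b (σ.symm p) else b (σ.symm a)) := by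
  unfold cycFun at h
  split_ifs at h ⊢ <;>
    simp only [Fin.lt_def, Fin.val_mk] at h <;>
    first
      | exact absurd h (lt_irrefl _)
      | (apply rank_pos hr; omega)

lemma rank_dev {b : Fin n → ℝ} {σ : Equiv.Perm (Fin n)} (hr : RankConsistent b σ)
    (i p : Fin n) (hp : (p : ℕ) < (σ i : ℕ)) :
    RankConsistent (Function.update b i (b (σ.symm p))) (σ.trans (cycPerm p (σ i) hp)) := by
  intro u w h
  simp only [Equiv.trans_apply, cycPerm_apply] at h
  have hupd : ∀ z, Function.update b i (b (σ.symm p)) z =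
      if ((σ z : ℕ) = (σ i : ℕ)) then b (σ.symm p) else b (σ.symm (σ z)) := by
    intro z
    by_cases hz : z = i
    · subst hz; simp
    · rw [Function.update_of_ne hz, if_neg, Equiv.symm_apply_apply]
      intro hcontra
      exact hz (σ.injective (Fin.ext hcontra))
  rw [hupd u, hupd w]
  exact core hr hp h

lemma tau_apply_i (σ : Equiv.Perm (Fin n)) (i p : Fin n) (hp : (p : ℕ) < (σ i : ℕ)) :
    (σ.trans (cycPerm p (σ i) hp)) i = p := by
  simp [Equiv.trans_apply, cycFun]

lemma tau_symm (σ : Equiv.Perm (Fin n)) (i p : Fin n) (hp : (p : ℕ) < (σ i : ℕ))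
    (hpn : (p : ℕ) + 1 < n) :
    (σ.trans (cycPerm p (σ i) hp)).symm ⟨(p : ℕ) + 1, hpn⟩ = σ.symm p := by
  rw [Equiv.symm_apply_eq]
  simp only [Equiv.trans_apply, Equiv.apply_symm_apply, cycPerm_apply]
  unfold cycFun
  rw [if_neg (by omega), dif_pos ⟨le_refl _, hp⟩]

lemma symm_ne (σ : Equiv.Perm (Fin n)) (i p : Fin n) (hp : (p : ℕ) < (σ i : ℕ)) :
    σ.symm p ≠ i := by
  intro hcontra
  have : σ (σ.symm p) = σ i := by rw [hcontra]
  rw [Equiv.apply_symm_apply] at this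
  subst this
  exact lt_irrefl _ hp

end Stmt14Aux

namespace Stmt14Aux

lemma nextBid_nonneg {n : ℕ} {b : Fin n → ℝ} (hb : ∀ i, 0 ≤ b i)
    (σ : Equiv.Perm (Fin n)) (i : Fin n) : 0 ≤ nextBid b σ i := by
  unfold nextBid
  split_ifs
  · exact hb _
  · exact le_refl 0

lemma key {n : ℕ} {α v c b : Fin n → ℝ} {σ : Equiv.Perm (Fin n)} (hα : Antitone α)
    (hαpos : ∀ j, 0 < α j) (hv : ∀ i, 0 ≤ v i) (hc : ∀ i, 0 ≤ c i)
    (heq : GspEquilibrium α v c b σ) (i p : Fin n) :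
    min (α p * v i) (c i) ≤ min (α (σ i) * v i) (c i) + α p * b (σ.symm p) := by
  obtain ⟨hb0, hrank, hno, hnash⟩ := heq
  have ht : 0 ≤ α p * b (σ.symm p) := mul_nonneg (hαpos p).le (hb0 _)
  have hL0 : 0 ≤ min (α (σ i) * v i) (c i) :=
    le_min (mul_nonneg (hαpos _).le (hv i)) (hc i)
  by_cases hca : α p ≤ α (σ i)
  · have h1 : α p * v i ≤ α (σ i) * v i := mul_le_mul_of_nonneg_right hca (hv i)
    have h2 := min_le_min h1 (le_refl (c i))
    linarith
  push_neg at hca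
  have hps : (p : ℕ) < (σ i : ℕ) := by
    by_contra hcon
    push_neg at hcon
    exact absurd (hα (Fin.le_def.mpr hcon)) (not_le.mpr hca)
  by_cases hB : min (α p * v i) (c i) ≤ α p * b (σ.symm p)
  · linarith
  push_neg at hB
  set y := b (σ.symm p) with hy
  set τ := σ.trans (cycPerm p (σ i) hps) with hτ
  have hτi : τ i = p := tau_apply_i σ i p hps
  have hrank' : RankConsistent (Function.update b i y) τ := rank_dev hrank i p hps
  have hnoov : NoOverAt α v c i (τ i) y := by
    rw [hτi]; exact hB.le
  have hdev := hnash i y τ (hb0 _) hrank' hnoov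
  have hpn : (p : ℕ) + 1 < n := lt_of_le_of_lt hps (σ i).isLt
  have hnext : nextBid (Function.update b i y) τ i = y := by
    have h1 : (τ i : ℕ) + 1 < n := by rw [hτi]; exact hpn
    unfold nextBid
    rw [dif_pos h1]
    have h2 : (⟨(τ i : ℕ) + 1, h1⟩ : Fin n) = ⟨(p : ℕ) + 1, hpn⟩ :=
      Fin.ext (by simp [hτi])
    rw [h2, hτ, tau_symm σ i p hps hpn, Function.update_of_ne (symm_ne σ i p hps)]
  have hdevutil : gspUtil α v (Function.update b i y) τ i = α p * v i - α p * y := by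
    unfold gspUtil
    rw [hnext, hτi]
  have hequtil : gspUtil α v b σ i ≤ α (σ i) * v i := by
    unfold gspUtil
    have := mul_nonneg (hαpos (σ i)).le (nextBid_nonneg hb0 σ i)
    linarith
  have h1 : α p * v i ≤ α (σ i) * v i + α p * y := by
    rw [hdevutil] at hdev; linarith
  calc min (α p * v i) (c i)
      ≤ min (α (σ i) * v i + α p * y) (c i + α p * y) :=
        min_le_min h1 (by linarith)
    _ = min (α (σ i) * v i) (c i) + α p * y := by rw [min_add_add_right]

end Stmt14Aux


/-- The liquid price of anarchy of GSP under the no-over assumption is at most 2: at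
every pure Nash equilibrium (b, σ) of every GSP position game, twice the liquid
welfare of σ is at least the liquid welfare of any assignment, in particular the
optimal one. -/
theorem stmt14 {n : ℕ} (α v c : Fin n → ℝ) (hα : Antitone α) (hαpos : ∀ j, 0 < α j)
    (hv : ∀ i, 0 ≤ v i) (hc : ∀ i, 0 ≤ c i)
    (b : Fin n → ℝ) (σ : Equiv.Perm (Fin n)) (heq : GspEquilibrium α v c b σ) :
    ∀ o : Equiv.Perm (Fin n), 2 * liquidWelfare α v c σ ≥ liquidWelfare α v c o := by
  intro o
  have hsum1 : liquidWelfare α v c o ≤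
      liquidWelfare α v c σ + ∑ i, α (o i) * b (σ.symm (o i)) := by
    unfold liquidWelfare
    rw [← Finset.sum_add_distrib]
    exact Finset.sum_le_sum fun i _ => Stmt14Aux.key hα hαpos hv hc heq i (o i)
  have hre : ∑ i, α (o i) * b (σ.symm (o i)) = ∑ j, α (σ j) * b j := by
    rw [Equiv.sum_comp o (fun q => α q * b (σ.symm q))]
    rw [← Equiv.sum_comp σ (fun q => α q * b (σ.symm q))]
    simp
  have hpay : ∑ j, α (σ j) * b j ≤ liquidWelfare α v c σ := by
    unfold liquidWelfare
    exact Finset.sum_le_sum fun j _ => heq.2.2.1 j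
  rw [ge_iff_le]
  linarith
end

section
/- The liquid price of anarchy of the VCG position mechanism under the no-over assumption is at most 2: for every position game induced by VCG and every pure Nash equilibrium b, 2·LW(σ(b)) ≥ OPT. -/
/-!
Let `p = o i` and let `β` be the bid of the player occupying `p` under `σ`. Either `α_p β`
already covers `min (α_p v_i) c_i`, or bidding exactly `β` is a no-over deviation for `i`; by
tying with the occupant she can then be ranked at `p`, where her VCG payment is at most `α_p β`,
so the equilibrium condition gives `α_p v_i - α_p β ≤ α_{σ i} v_i`. Either way
`min (α_p v_i) c_i ≤ min (α_{σ i} v_i) c_i + α_p β`. Summing over `i`, the extra terms add up to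
`∑_j α_j b_{σ⁻¹ j}`, which the no-over assumption bounds by the liquid welfare of `σ`.
-/

open Finset

theorem Fin.sum_filter_lt_sub_pred {M : Type*} [AddCommGroup M] {n : ℕ} (f : Fin n → M)
    (q : Fin n) :
    ∑ k ∈ univ.filter (fun k : Fin n => q < k),
      (f ⟨(k : ℕ) - 1, lt_of_le_of_lt (Nat.sub_le _ _) k.isLt⟩ - f k)
      = f q - f ⟨n - 1, Nat.sub_lt q.pos Nat.one_pos⟩ := by
  have hq := q.isLt
  let g : ℕ → M := fun t => f ⟨min t (n - 1), by omega⟩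
  have hg : ∀ (k : Fin n) (t : ℕ), (k : ℕ) = t → f k = g t := fun k t h => by
    simp only [g]; congr; ext; simp only; omega
  calc _ = ∑ t ∈ Ico (q : ℕ) (n - 1), (g t - g (t + 1)) := by
        refine sum_nbij' (fun k => (k : ℕ) - 1) (fun t => ⟨min (t + 1) (n - 1), by omega⟩)
          ?_ ?_ ?_ ?_ ?_ <;> intro k hk <;>
          simp only [mem_univ, true_and, mem_Ico, mem_filter, Fin.lt_def] at hk ⊢
        · omega
        · omega
        · ext; simp only; omega
        · omega
        · rw [hg _ (k - 1) rfl, hg k (k - 1 + 1) (by omega)]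
    _ = -(g (n - 1) - g q) := by rw [← sum_Ico_sub g (by omega), ← sum_neg_distrib]; simp
    _ = f q - f ⟨n - 1, Nat.sub_lt q.pos Nat.one_pos⟩ := by
        rw [neg_sub, hg q q rfl, hg _ (n - 1) rfl]

theorem Fin.val_cycleIcc_of_ne {n : ℕ} [NeZero n] {p q k : Fin n} (hk : k ≠ q) :
    (Fin.cycleIcc p q k : ℕ) = if p ≤ k ∧ k < q then (k : ℕ) + 1 else k := by
  rcases lt_or_ge k p with hkp | hpk
  · rw [Fin.cycleIcc_of_lt hkp, if_neg (by omega)]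
  rcases lt_or_gt_of_ne hk with hkq | hqk
  · have := q.isLt
    rw [Fin.cycleIcc_of_ge_of_lt hpk hkq, if_pos ⟨hpk, hkq⟩, Fin.val_add, Fin.val_one',
      Nat.add_mod_mod, Nat.mod_eq_of_lt (by omega)]
  · rw [Fin.cycleIcc_of_gt hqk, if_neg (by omega)]

theorem Fin.cycleIcc_lt_cycleIcc_iff {n : ℕ} [NeZero n] {p q k l : Fin n} (hk : k ≠ q)
    (hl : l ≠ q) : Fin.cycleIcc p q k < Fin.cycleIcc p q l ↔ k < l := by
  rw [Fin.lt_def, Fin.lt_def, Fin.val_cycleIcc_of_ne hk, Fin.val_cycleIcc_of_ne hl]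
  split_ifs with hk' hl' hl' <;>
    simp only [Fin.le_def, Fin.lt_def, not_and_or, not_le, not_lt] at hk' hl' <;> omega

theorem Fin.cycleIcc_lt_iff {n : ℕ} [NeZero n] {p q k : Fin n} (hk : k ≠ q) :
    Fin.cycleIcc p q k < p ↔ k < p := by
  rw [Fin.lt_def, Fin.lt_def, Fin.val_cycleIcc_of_ne hk]
  split_ifs with hk' <;> simp only [Fin.le_def, Fin.lt_def, not_and_or, not_le, not_lt] at hk' <;>
    omega

section Auction

variable {n : ℕ} {α v c b : Fin n → ℝ} {σ : Equiv.Perm (Fin n)}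

theorem RankConsistent.le_of_le (h : RankConsistent b σ) {i j : Fin n} (hij : σ i ≤ σ j) :
    b j ≤ b i := by
  rcases hij.lt_or_eq with hlt | heq
  · exact h i j hlt
  · rw [σ.injective heq]

/-- `Fin.cycleIcc p (σ i)` moves `i` to `p` and pushes the players in positions
`p, …, σ i - 1` down by one. -/
theorem RankConsistent.update_cycleIcc [NeZero n] (h : RankConsistent b σ) {i p : Fin n}
    (hp : p ≤ σ i) :
    RankConsistent (Function.update b i (b (σ.symm p))) (σ.trans (Fin.cycleIcc p (σ i))) := by
  have hτi : Fin.cycleIcc p (σ i) (σ i) = p := Fin.cycleIcc_of_last hp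
  have hσp : σ (σ.symm p) = p := σ.apply_symm_apply p
  intro a a' hlt
  simp only [Equiv.trans_apply] at hlt
  rcases eq_or_ne a i with rfl | ha <;> rcases eq_or_ne a' a with rfl | ha'
  · exact (lt_irrefl _ hlt).elim
  · rw [Function.update_self, Function.update_of_ne ha']
    rw [hτi] at hlt
    have hpa' : p ≤ σ a' := not_lt.1 ((Fin.cycleIcc_lt_iff (σ.injective.ne ha')).not.1 hlt.not_gt)
    exact h.le_of_le (by rwa [hσp])
  · exact (lt_irrefl _ hlt).elim
  rcases eq_or_ne a' i with rfl | ha'i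
  · rw [Function.update_self, Function.update_of_ne ha]
    rw [hτi, Fin.cycleIcc_lt_iff (σ.injective.ne ha)] at hlt
    exact h a _ (by rwa [hσp])
  · rw [Function.update_of_ne ha, Function.update_of_ne ha'i]
    exact h a a' ((Fin.cycleIcc_lt_cycleIcc_iff (σ.injective.ne ha) (σ.injective.ne ha'i)).1 hlt)

theorem vcgPay_nonneg (hα : Antitone α) (hb : ∀ j, 0 ≤ b j) (σ : Equiv.Perm (Fin n))
    (i : Fin n) : 0 ≤ vcgPay α b σ i :=
  sum_nonneg fun _ _ => mul_nonneg (hb _) (sub_nonneg.2 (hα (Fin.le_def.2 (Nat.sub_le _ _))))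

theorem vcgPay_le_mul (hα : Antitone α) (hα0 : ∀ j, 0 ≤ α j) (hrc : RankConsistent b σ)
    {i : Fin n} (hbi : 0 ≤ b i) : vcgPay α b σ i ≤ α (σ i) * b i :=
  calc vcgPay α b σ i
      ≤ ∑ k ∈ univ.filter (fun k : Fin n => σ i < k),
          b i * (α ⟨(k : ℕ) - 1, lt_of_le_of_lt (Nat.sub_le _ _) k.isLt⟩ - α k) := by
        refine sum_le_sum fun k hk => mul_le_mul_of_nonneg_right (hrc i _ ?_)
          (sub_nonneg.2 (hα (Fin.le_def.2 (Nat.sub_le _ _))))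
        rw [Equiv.apply_symm_apply]
        exact (mem_filter.1 hk).2
    _ = b i * (α (σ i) - α ⟨n - 1, Nat.sub_lt (σ i).pos Nat.one_pos⟩) := by
        rw [← mul_sum, Fin.sum_filter_lt_sub_pred]
    _ ≤ α (σ i) * b i := by nlinarith [hα0 ⟨n - 1, Nat.sub_lt (σ i).pos Nat.one_pos⟩]

theorem VcgEquilibrium.mul_sub_mul_le (heq : VcgEquilibrium α v c b σ) (hα : Antitone α)
    (hα0 : ∀ j, 0 ≤ α j) {i p : Fin n} (hp : p ≤ σ i)
    (hno : NoOverAt α v c i p (b (σ.symm p))) :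
    α p * v i - α p * b (σ.symm p) ≤ α (σ i) * v i := by
  obtain ⟨hb, hrc, -, hnash⟩ := heq
  have : NeZero n := ⟨p.pos.ne'⟩
  set β := b (σ.symm p)
  set τ := σ.trans (Fin.cycleIcc p (σ i))
  have hτi : τ i = p := Fin.cycleIcc_of_last hp
  have hrcτ : RankConsistent (Function.update b i β) τ := hrc.update_cycleIcc hp
  have hdev := hnash i β τ (hb _) hrcτ (hτi ▸ hno)
  have hpay : vcgPay α (Function.update b i β) τ i ≤ α p * β := by
    simpa only [hτi, Function.update_self] using
      vcgPay_le_mul hα hα0 hrcτ (i := i) (by simpa only [Function.update_self] using hb _)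
  have hpay₀ := vcgPay_nonneg hα hb σ i
  rw [vcgUtil, vcgUtil, hτi] at hdev
  linarith

theorem VcgEquilibrium.min_le_min_add (heq : VcgEquilibrium α v c b σ) (hα : Antitone α)
    (hα0 : ∀ j, 0 ≤ α j) (hv : ∀ i, 0 ≤ v i) (i p : Fin n) :
    min (α p * v i) (c i) ≤ min (α (σ i) * v i) (c i) + α p * b (σ.symm p) := by
  have hβ : 0 ≤ α p * b (σ.symm p) := mul_nonneg (hα0 p) (heq.1 _)
  rcases le_total (σ i) p with hp | hp
  · calc min (α p * v i) (c i) ≤ min (α (σ i) * v i) (c i) :=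
          min_le_min_right _ (mul_le_mul_of_nonneg_right (hα hp) (hv i))
      _ ≤ _ := le_add_of_nonneg_right hβ
  by_cases hno : NoOverAt α v c i p (b (σ.symm p))
  · have hdev := heq.mul_sub_mul_le hα hα0 hp hno
    calc min (α p * v i) (c i)
        ≤ min (α (σ i) * v i + α p * b (σ.symm p)) (c i + α p * b (σ.symm p)) :=
          min_le_min (by linarith) (le_add_of_nonneg_right hβ)
      _ = _ := min_add_add_right _ _ _
  · have hlw : 0 ≤ min (α (σ i) * v i) (c i) :=
      (mul_nonneg (hα0 _) (heq.1 i)).trans (heq.2.2.1 i)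
    exact (le_of_not_ge hno).trans (le_add_of_nonneg_left hlw)

theorem VcgEquilibrium.sum_mul_bid_le_liquidWelfare (heq : VcgEquilibrium α v c b σ) :
    ∑ j, α (σ j) * b j ≤ liquidWelfare α v c σ :=
  sum_le_sum fun j _ => heq.2.2.1 j

end Auction

theorem stmt15_general {n : ℕ} (α v c : Fin n → ℝ) (hα : Antitone α) (hαpos : ∀ j, 0 < α j)
    (hv : ∀ i, 0 ≤ v i)
    (b : Fin n → ℝ) (σ : Equiv.Perm (Fin n)) (heq : VcgEquilibrium α v c b σ) :
    ∀ o : Equiv.Perm (Fin n), 2 * liquidWelfare α v c σ ≥ liquidWelfare α v c o := by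
  intro o
  have hα0 : ∀ j, 0 ≤ α j := fun j => (hαpos j).le
  have hbids : ∑ i, α (o i) * b (σ.symm (o i)) = ∑ j, α (σ j) * b j := by
    rw [Equiv.sum_comp o fun k => α k * b (σ.symm k),
      ← Equiv.sum_comp σ fun k => α k * b (σ.symm k)]
    simp only [Equiv.symm_apply_apply]
  calc liquidWelfare α v c o
      ≤ ∑ i, (min (α (σ i) * v i) (c i) + α (o i) * b (σ.symm (o i))) :=
        sum_le_sum fun i _ => heq.min_le_min_add hα hα0 hv i (o i)
    _ = liquidWelfare α v c σ + ∑ j, α (σ j) * b j := by rw [sum_add_distrib, hbids]; rfl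
    _ ≤ 2 * liquidWelfare α v c σ := by linarith [heq.sum_mul_bid_le_liquidWelfare]

/-- The liquid price of anarchy of the VCG position mechanism under the no-over
assumption is at most 2: at every pure Nash equilibrium (b, σ) of every VCG position
game, twice the liquid welfare of σ is at least the liquid welfare of any assignment,
in particular the optimal one. -/
theorem stmt15 {n : ℕ} (α v c : Fin n → ℝ) (hα : Antitone α) (hαpos : ∀ j, 0 < α j)
    (hv : ∀ i, 0 ≤ v i) (hc : ∀ i, 0 ≤ c i)
    (b : Fin n → ℝ) (σ : Equiv.Perm (Fin n)) (heq : VcgEquilibrium α v c b σ) :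
    ∀ o : Equiv.Perm (Fin n), 2 * liquidWelfare α v c σ ≥ liquidWelfare α v c o :=
  stmt15_general α v c hα hαpos hv b σ heq
end

section
/- The liquid price of anarchy of EGFP is at most 2: for every position game induced by EGFP and every pure Nash equilibrium bid matrix b (with payments within budgets), 2·LW(σ(b)) ≥ OPT. -/
/-! At equilibrium a player `i` may deviate to bid, for a position `p` above hers, exactly the
winning bid `b (σ.symm p) p` there and nothing elsewhere; a consistent allocation then gives
her `p`. Hence her liquid value at `p` is at most her equilibrium liquid value plus the price
of `p`. Summing along any assignment `o`, the prices add up to the total revenue, which is at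
most `liquidWelfare σ` since payments are within budgets and, by individual rationality,
within values. -/

open Function Equiv

variable {n : ℕ}

/-- A lexicographically maximal vector of winning bids `q ↦ B (τ.symm q) q` is consistent:
otherwise swapping the winner of the first bad position with a higher bidder below her
raises that vector lexicographically without changing the earlier positions. -/
theorem exists_egfpConsistent_from (B : Fin n → Fin n → ℝ) (π : Perm (Fin n)) (m : ℕ) :
    ∃ τ : Perm (Fin n), (∀ j, (π j : ℕ) < m → τ j = π j) ∧
      ∀ p j : Fin n, m ≤ (p : ℕ) → p ≤ τ j → B j p ≤ B (τ.symm p) p := by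
  classical
  set S := Finset.univ.filter fun τ : Perm (Fin n) => ∀ j, (π j : ℕ) < m → τ j = π j
  obtain ⟨τ, hτS, hτmax⟩ := S.exists_max_image (fun τ => toLex fun q => B (τ.symm q) q)
    ⟨π, by simp [S]⟩
  simp only [S, Finset.mem_filter, Finset.mem_univ, true_and] at hτS hτmax
  refine ⟨τ, hτS, fun p j hmp hpj => ?_⟩
  obtain ⟨w, hw⟩ : ∃ w, τ.symm p = w := ⟨_, rfl⟩
  have hτw : τ w = p := by rw [← hw, τ.apply_symm_apply]
  have hτ'S : ∀ x, (π x : ℕ) < m → ((swap j w).trans τ) x = π x := by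
    intro x hx
    have hxτ : (τ x : ℕ) < m := hτS x hx ▸ hx
    have hxj : x ≠ j := by rintro rfl; exact absurd (Fin.le_def.mp hpj) (by omega)
    have hxw : x ≠ w := by rintro rfl; rw [hτw] at hxτ; omega
    rw [trans_apply, swap_apply_of_ne_of_ne hxj hxw, hτS x hx]
  have hwin := Pi.apply_le_of_toLex (x := fun q => B (((swap j w).trans τ).symm q) q)
    (y := fun q => B (τ.symm q) q) (i := p) (hτmax _ hτ'S) fun q hq => ?_
  · simpa only [symm_trans_apply, symm_swap, hw, swap_apply_right] using hwin
  have hqj : τ.symm q ≠ j := by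
    rintro rfl; rw [τ.apply_symm_apply] at hpj; exact absurd hq (not_lt.mpr hpj)
  have hqw : τ.symm q ≠ w := fun h => hq.ne (τ.symm.injective (h.trans hw.symm))
  simp only [symm_trans_apply, symm_swap, swap_apply_of_ne_of_ne hqj hqw]

theorem exists_egfpConsistent (B : Fin n → Fin n → ℝ) :
    ∃ τ : Perm (Fin n), EgfpConsistent B τ :=
  let ⟨τ, _, hτ⟩ := exists_egfpConsistent_from B 1 0
  ⟨τ, fun p j => hτ p j (Nat.zero_le _)⟩

/-- Positions before `p` keep their winners, `i` takes `p`, and the rest is completed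
greedily. -/
theorem EgfpConsistent.exists_update_single {b : Fin n → Fin n → ℝ} {σ : Perm (Fin n)}
    (hcons : EgfpConsistent b σ) (hb0 : ∀ i p, 0 ≤ b i p) {i p : Fin n} (hp : p < σ i) :
    ∃ τ : Perm (Fin n), τ i = p ∧
      EgfpConsistent (update b i (Pi.single p (b (σ.symm p) p))) τ := by
  classical
  set w := σ.symm p
  set B := update b i (Pi.single p (b w p))
  have hσw : σ w = p := σ.apply_symm_apply p
  have hwi : w ≠ i := by rintro h; rw [← h, hσw] at hp; exact hp.false
  obtain ⟨τ, hτπ, hτcons⟩ := exists_egfpConsistent_from B ((swap i w).trans σ) (p + 1)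
  have hwin : ∀ q, q ≤ p → τ.symm q = swap i w (σ.symm q) := by
    intro q hq
    rw [τ.symm_apply_eq, hτπ _ (by simpa using Nat.lt_succ_of_le hq)]
    simp
  have hτi : τ i = p := by
    rw [← τ.symm_apply_eq.mp (by rw [hwin p le_rfl, swap_apply_right])]
  have hprice : ∀ q, q ≤ p → B (τ.symm q) q = b (σ.symm q) q := by
    intro q hq
    rcases hq.eq_or_lt with rfl | hq
    · rw [τ.symm_apply_eq.mpr hτi.symm]
      simp [B, w]
    · have hqi : σ.symm q ≠ i := by
        rintro h; rw [← h, σ.apply_symm_apply] at hp; exact (hq.trans hp).false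
      have hqw : σ.symm q ≠ w := fun h => hq.ne (σ.symm.injective h)
      simp only [B, hwin q hq.le, swap_apply_of_ne_of_ne hqi hqw, update_of_ne hqi]
  have hbelow : ∀ j, j ≠ i → ∀ q, q ≤ p → q ≤ τ j → q ≤ σ j := by
    intro j hji q hqp hqj
    by_contra! hjq
    have hjw : j ≠ w := by rintro rfl; exact (hσw ▸ hjq).not_ge hqp
    have hπj : (swap i w).trans σ j = σ j := by rw [trans_apply, swap_apply_of_ne_of_ne hji hjw]
    rw [hτπ j (by rw [hπj]; exact Nat.lt_succ_of_le (hjq.trans_le hqp).le), hπj] at hqj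
    exact hqj.not_gt hjq
  refine ⟨τ, hτi, fun q j hqj => ?_⟩
  rcases le_or_gt q p with hqp | hpq
  · rw [hprice q hqp]
    rcases eq_or_ne j i with rfl | hji
    · rcases hqp.eq_or_lt with rfl | hqp
      · simp [B, w]
      · simpa [B, Pi.single_eq_of_ne hqp.ne] using hb0 _ _
    · simp only [B, update_of_ne hji]
      exact hcons q j (hbelow j hji q hqp hqj)
  · exact hτcons q j hpq hqj

namespace EgfpEquilibrium

variable {α v c : Fin n → ℝ} {b : Fin n → Fin n → ℝ} {σ : Perm (Fin n)}

/-- Bidding zero everywhere guarantees the value of whatever position one ends up in. -/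
theorem egfpUtil_nonneg (hα0 : ∀ j, 0 ≤ α j) (hv : ∀ i, 0 ≤ v i)
    (heq : EgfpEquilibrium α v c b σ) (i : Fin n) : 0 ≤ egfpUtil α v b σ i := by
  obtain ⟨hb0, -, hbud, hnash⟩ := heq
  obtain ⟨τ, hτ⟩ := exists_egfpConsistent (update b i 0)
  calc 0 ≤ α (τ i) * v i := mul_nonneg (hα0 _) (hv i)
    _ = egfpUtil α v (update b i 0) τ i := by simp [egfpUtil]
    _ ≤ egfpUtil α v b σ i :=
      hnash i 0 τ (fun _ => le_rfl) hτ ((hb0 i (σ i)).trans (hbud i))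

theorem payment_le_min (hα0 : ∀ j, 0 ≤ α j) (hv : ∀ i, 0 ≤ v i)
    (heq : EgfpEquilibrium α v c b σ) (i : Fin n) :
    b i (σ i) ≤ min (α (σ i) * v i) (c i) :=
  le_min (sub_nonneg.mp (heq.egfpUtil_nonneg hα0 hv i)) (heq.2.2.1 i)

theorem value_sub_price_le_egfpUtil (heq : EgfpEquilibrium α v c b σ) {i p : Fin n}
    (hp : p < σ i) (hbud : b (σ.symm p) p ≤ c i) :
    α p * v i - b (σ.symm p) p ≤ egfpUtil α v b σ i := by
  obtain ⟨hb0, hcons, -, hnash⟩ := heq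
  obtain ⟨τ, hτi, hτ⟩ := hcons.exists_update_single hb0 hp
  have hdev := hnash i (Pi.single p (b (σ.symm p) p)) τ
    (fun q => by by_cases hq : q = p <;> simp [hq, hb0]) hτ (by simpa [hτi] using hbud)
  simpa [egfpUtil, hτi] using hdev

/-- The smoothness inequality, from deviating to the winning bid for `p` when `p` is above
`σ i` and affordable. -/
theorem min_le_min_add_price (hα : Antitone α) (hα0 : ∀ j, 0 ≤ α j) (hv : ∀ i, 0 ≤ v i)
    (heq : EgfpEquilibrium α v c b σ) (i p : Fin n) :
    min (α p * v i) (c i) ≤ min (α (σ i) * v i) (c i) + b (σ.symm p) p := by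
  have hprice : 0 ≤ b (σ.symm p) p := heq.1 _ _
  have hmin : 0 ≤ min (α (σ i) * v i) (c i) :=
    (heq.1 i (σ i)).trans (heq.payment_le_min hα0 hv i)
  rcases le_or_gt (σ i) p with hip | hpi
  · have := min_le_min_right (c i) (mul_le_mul_of_nonneg_right (hα hip) (hv i))
    linarith
  rcases lt_or_ge (c i) (b (σ.symm p) p) with hcp | hpc
  · linarith [min_le_right (α p * v i) (c i)]
  have hdev := heq.value_sub_price_le_egfpUtil hpi hpc
  have hbid := heq.1 i (σ i)
  calc min (α p * v i) (c i)
      ≤ min (α (σ i) * v i + b (σ.symm p) p) (c i + b (σ.symm p) p) := by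
        unfold egfpUtil at hdev
        exact min_le_min (by linarith) (by linarith)
    _ = min (α (σ i) * v i) (c i) + b (σ.symm p) p := min_add_add_right _ _ _

end EgfpEquilibrium

theorem stmt16_general {n : ℕ} (α v c : Fin n → ℝ) (hα : Antitone α) (hαpos : ∀ j, 0 < α j)
    (hv : ∀ i, 0 ≤ v i)
    (b : Fin n → Fin n → ℝ) (σ : Equiv.Perm (Fin n)) (heq : EgfpEquilibrium α v c b σ) :
    ∀ o : Equiv.Perm (Fin n), 2 * liquidWelfare α v c σ ≥ liquidWelfare α v c o := by
  intro o
  have hα0 : ∀ j, 0 ≤ α j := fun j => (hαpos j).le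
  have hdev : liquidWelfare α v c o ≤
      liquidWelfare α v c σ + ∑ i, b (σ.symm (o i)) (o i) := by
    rw [liquidWelfare, liquidWelfare, ← Finset.sum_add_distrib]
    exact Finset.sum_le_sum fun i _ => heq.min_le_min_add_price hα hα0 hv i (o i)
  have hprices : ∑ i, b (σ.symm (o i)) (o i) = ∑ k, b k (σ k) := by
    simpa using Equiv.sum_comp (o.trans σ.symm) fun k => b k (σ k)
  have hrevenue : ∑ k, b k (σ k) ≤ liquidWelfare α v c σ :=
    Finset.sum_le_sum fun k _ => heq.payment_le_min hα0 hv k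
  linarith

/-- The liquid price of anarchy of EGFP is at most 2: at every pure Nash equilibrium
(b, σ) of every EGFP position game (with payments within budgets), twice the liquid
welfare of σ is at least the liquid welfare of any assignment, in particular the
optimal one. -/
theorem stmt16 {n : ℕ} (α v c : Fin n → ℝ) (hα : Antitone α) (hαpos : ∀ j, 0 < α j)
    (hv : ∀ i, 0 ≤ v i) (hc : ∀ i, 0 ≤ c i)
    (b : Fin n → Fin n → ℝ) (σ : Equiv.Perm (Fin n)) (heq : EgfpEquilibrium α v c b σ) :
    ∀ o : Equiv.Perm (Fin n), 2 * liquidWelfare α v c σ ≥ liquidWelfare α v c o :=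
  stmt16_general α v c hα hαpos hv b σ heq
end
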